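/- Let c ∈ ℝ³ with ‖c‖ = 1 (i.e. c₀ = 0). The set of vectors m = f + b, where f, b ∈ ℝ³ range over solutions of b × c = 0, f · c = 0, f · b = 0, ‖f‖² - ‖b‖² = 1, is exactly the set {m ∈ ℝ³ : ‖m‖² - 2(m·c)² = 1} (a hyperboloid: in coordinates with x-axis along c, y² + z² - x² = 1). -/
import Mathlib


open Matrix

theorem stmt14 (c : Fin 3 → ℝ) (hc : c ⬝ᵥ c = 1) :
    {m : Fin 3 → ℝ | ∃ f b : Fin 3 → ℝ,
        crossProduct b c = 0 ∧ f ⬝ᵥ c = 0 ∧ f ⬝ᵥ b = 0 ∧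
          f ⬝ᵥ f - b ⬝ᵥ b = 1 ∧ m = f + b} =
      {m : Fin 3 → ℝ | m ⬝ᵥ m - 2 * (m ⬝ᵥ c) ^ 2 = 1} := by
  simp only [dotProduct, Fin.sum_univ_three] at hc ⊢
  ext m
  simp only [Set.mem_setOf_eq, dotProduct, Fin.sum_univ_three]
  constructor
  · rintro ⟨f, b, hbc, hfc, hfb, hn, rfl⟩
    rw [cross_apply] at hbc
    have e0 := congrFun hbc 0
    have e1 := congrFun hbc 1
    have e2 := congrFun hbc 2
    simp at e0 e1 e2
    simp only [Pi.add_apply]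
    have hb0 : b 0 = (b 0 * c 0 + b 1 * c 1 + b 2 * c 2) * c 0 := by
      linear_combination (-(b 0)) * hc + c 1 * e2 - c 2 * e1
    have hb1 : b 1 = (b 0 * c 0 + b 1 * c 1 + b 2 * c 2) * c 1 := by
      linear_combination (-(b 1)) * hc - c 0 * e2 + c 2 * e0
    have hb2 : b 2 = (b 0 * c 0 + b 1 * c 1 + b 2 * c 2) * c 2 := by
      linear_combination (-(b 2)) * hc + c 0 * e1 - c 1 * e0
    linear_combination hn + 2 * hfb + 2 * (b 0) * hb0 + 2 * (b 1) * hb1 +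
      2 * (b 2) * hb2 +
      ((-2) * (f 0 * c 0 + f 1 * c 1 + f 2 * c 2) -
        4 * (b 0 * c 0 + b 1 * c 1 + b 2 * c 2)) * hfc
  · intro hm
    refine ⟨fun i => m i - (m 0 * c 0 + m 1 * c 1 + m 2 * c 2) * c i,
      fun i => (m 0 * c 0 + m 1 * c 1 + m 2 * c 2) * c i, ?_, ?_, ?_, ?_, ?_⟩
    · rw [cross_apply]
      funext i
      fin_cases i <;> simp <;> ring
    · simp only []
      linear_combination (-(m 0 * c 0 + m 1 * c 1 + m 2 * c 2)) * hc
    · simp only []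
      linear_combination
        (-((m 0 * c 0 + m 1 * c 1 + m 2 * c 2) *
          (m 0 * c 0 + m 1 * c 1 + m 2 * c 2))) * hc
    · simp only []
      linear_combination hm
    · funext i
      simp only [Pi.add_apply]
      ring
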